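/- If H is an infinite-dimensional complex Hilbert space, then every maximal compatible subset of a star [S⟩_k in G_k(H) is infinite. -/

import Mathlib

/-!
If a finite compatible family `M` in the star `[S⟩_k` were maximal, all its members would lie in
the finite-dimensional space `W = S + ∑ M`. Since `H` is infinite-dimensional there is a nonzero
vector `v ⊥ W`, and `X = S + ℂv` lies in the star but not in `M`. Every `Y ∈ M` splits as
`(Y ⊖ S) ⊕ S`, and `ℂv` is orthogonal to `Y`, so `X` and `Y` are compatible with common
part `S`; adjoining `X` contradicts maximality.
-/

def Compatible {H : Type*} [NormedAddCommGroup H] [InnerProductSpace ℂ H]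
    (X Y : Submodule ℂ H) : Prop :=
  ∃ X' Y' Z : Submodule ℂ H, X' ⟂ Y' ∧ X' ⟂ Z ∧ Y' ⟂ Z ∧ X = X' ⊔ Z ∧ Y = Y' ⊔ Z

/-- A set of subspaces is compatible if any two distinct members are compatible. -/
def CompatibleSet {H : Type*} [NormedAddCommGroup H] [InnerProductSpace ℂ H]
    (M : Set (Submodule ℂ H)) : Prop :=
  ∀ X ∈ M, ∀ Y ∈ M, X ≠ Y → Compatible X Y

namespace Submodule

open Module

variable {𝕜 E : Type*} [RCLike 𝕜] [NormedAddCommGroup E] [InnerProductSpace 𝕜 E]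

theorem exists_mem_orthogonal_ne_zero (hE : ¬ FiniteDimensional 𝕜 E)
    (W : Submodule 𝕜 E) [FiniteDimensional 𝕜 W] : ∃ v ∈ Wᗮ, v ≠ 0 := by
  refine exists_mem_ne_zero_of_ne_bot fun hbot => hE ?_
  exact Module.Finite.equiv (LinearEquiv.ofTop W (orthogonal_eq_bot_iff.mp hbot))

theorem finrank_sup_span_singleton_of_mem_orthogonal (S : Submodule 𝕜 E)
    [FiniteDimensional 𝕜 S] {v : E} (hv : v ∈ Sᗮ) (hv0 : v ≠ 0) :
    finrank 𝕜 (S ⊔ 𝕜 ∙ v : Submodule 𝕜 E) = finrank 𝕜 S + 1 := by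
  have hdisj : S ⊓ 𝕜 ∙ v = ⊥ := le_bot_iff.mp <|
    S.inf_orthogonal_eq_bot ▸ inf_le_inf_left S ((span_singleton_le_iff_mem _ _).mpr hv)
  have := finrank_sup_add_finrank_inf_eq S (𝕜 ∙ v)
  rwa [hdisj, finrank_bot, add_zero, finrank_span_singleton hv0] at this

end Submodule

section

open Submodule

variable {H : Type*} [NormedAddCommGroup H] [InnerProductSpace ℂ H]

theorem Compatible.symm {X Y : Submodule ℂ H} (h : Compatible X Y) : Compatible Y X := by
  obtain ⟨X', Y', Z, hX'Y', hX'Z, hY'Z, rfl, rfl⟩ := h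
  exact ⟨Y', X', Z, hX'Y'.symm, hY'Z, hX'Z, rfl, rfl⟩

theorem CompatibleSet.insert {M : Set (Submodule ℂ H)} (hM : CompatibleSet M)
    {X : Submodule ℂ H} (hX : ∀ Y ∈ M, Compatible X Y) : CompatibleSet (insert X M) := by
  rintro A (rfl | hA) B (rfl | hB) hne
  · exact absurd rfl hne
  · exact hX B hB
  · exact (hX A hA).symm
  · exact hM A hA B hB hne

theorem compatible_sup_span_singleton {S Y : Submodule ℂ H} [S.HasOrthogonalProjection]
    (hSY : S ≤ Y) {v : H} (hv : v ∈ Yᗮ) : Compatible (S ⊔ ℂ ∙ v) Y := by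
  have hvY : ℂ ∙ v ⟂ Y := isOrtho_iff_le.mpr ((span_singleton_le_iff_mem _ _).mpr hv)
  refine ⟨ℂ ∙ v, Sᗮ ⊓ Y, S, hvY.mono_right inf_le_right, hvY.mono_right hSY,
    (isOrtho_orthogonal_left S).mono_left inf_le_left, sup_comm _ _, ?_⟩
  rw [sup_comm, sup_orthogonal_inf_of_hasOrthogonalProjection hSY]

end

theorem stmt_9_general {H : Type*} [NormedAddCommGroup H] [InnerProductSpace ℂ H]
    (hinf : ¬ FiniteDimensional ℂ H) {k : ℕ} (hk1 : 1 ≤ k)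
    (S : Submodule ℂ H) (hS : Module.finrank ℂ S = k - 1) [FiniteDimensional ℂ S]
    (M : Set (Submodule ℂ H))
    (hMstar : ∀ X ∈ M, S ≤ X ∧ Module.finrank ℂ X = k)
    (hMcomp : CompatibleSet M)
    (hmax : ∀ M' : Set (Submodule ℂ H),
      (∀ X ∈ M', S ≤ X ∧ Module.finrank ℂ X = k) → CompatibleSet M' → M ⊆ M' → M' = M) :
    M.Infinite := by
  intro hfin
  have : Finite M := hfin
  have : ∀ Y : M, FiniteDimensional ℂ Y.1 := fun Y =>
    Module.finite_of_finrank_pos (by rw [(hMstar Y Y.2).2]; omega)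
  let W := S ⊔ ⨆ Y : M, Y.1
  obtain ⟨v, hvW, hv0⟩ := Submodule.exists_mem_orthogonal_ne_zero hinf W
  have hYW : ∀ Y ∈ M, Y ≤ W := fun Y hY =>
    le_sup_of_le_right (le_iSup (fun Y : M => Y.1) ⟨Y, hY⟩)
  have hvY : ∀ Y ∈ M, v ∈ Yᗮ := fun Y hY => Submodule.orthogonal_le (hYW Y hY) hvW
  let X := S ⊔ ℂ ∙ v
  have hXstar : S ≤ X ∧ Module.finrank ℂ X = k := ⟨le_sup_left, by
    rw [S.finrank_sup_span_singleton_of_mem_orthogonal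
      (Submodule.orthogonal_le le_sup_left hvW) hv0, hS]
    omega⟩
  have hXM : X ∈ M := by
    rw [← hmax (insert X M) (Set.forall_mem_insert.mpr ⟨hXstar, hMstar⟩)
      (hMcomp.insert fun Y hY => compatible_sup_span_singleton (hMstar Y hY).1 (hvY Y hY))
      (Set.subset_insert X M)]
    exact Set.mem_insert X M
  exact hv0 (inner_self_eq_zero.mp (Submodule.inner_right_of_mem_orthogonal
    (hYW X hXM (Submodule.mem_sup_right (Submodule.mem_span_singleton_self v))) hvW))

theorem stmt_9 {H : Type*} [NormedAddCommGroup H] [InnerProductSpace ℂ H] [CompleteSpace H]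
    (hinf : ¬ FiniteDimensional ℂ H) {k : ℕ} (hk1 : 1 ≤ k)
    (S : Submodule ℂ H) (hS : Module.finrank ℂ S = k - 1) [FiniteDimensional ℂ S]
    (M : Set (Submodule ℂ H))
    (hMstar : ∀ X ∈ M, S ≤ X ∧ Module.finrank ℂ X = k)
    (hMcomp : CompatibleSet M)
    (hmax : ∀ M' : Set (Submodule ℂ H),
      (∀ X ∈ M', S ≤ X ∧ Module.finrank ℂ X = k) → CompatibleSet M' → M ⊆ M' → M' = M) :
    M.Infinite :=
  stmt_9_general hinf hk1 S hS M hMstar hMcomp hmax
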